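/- Soundness of the abstract transition relation: let A be a timed automaton and ≼ a preorder on valuations whose lift to configurations is a time-abstract simulation for A, with associated abstraction a and abstract transition relation ⇒_a. If (q0, a(Z0)) ⇒_a^* (q, W) and W ≠ ∅, then there exists a valuation v ∈ W such that there is a run of A from (q0, 0̄) ending in the configuration (q, v). -/

import Mathlib

/-! Common framework: clocks, valuations, guards, zones, timed automata,
LU-bounds and LU-abstraction, following the paper's definitions. -/

abbrev Val (X : Type*) := X → NNReal

/-- Time delay: `v + δ`. -/
def delay {X : Type*} (v : Val X) (δ : NNReal) : Val X := fun x => v x + δ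

open Classical in
/-- Reset `[R]v`. -/
noncomputable def resetV {X : Type*} (R : Set X) (v : Val X) : Val X :=
  fun x => if x ∈ R then 0 else v x

/-- The valuation `0̄`. -/
def zeroVal (X : Type*) : Val X := fun _ => 0

/-- Comparison operators for atomic clock constraints. -/
inductive Cmp where
  | lt | le | eq | ge | gt

/-- Satisfaction of `a # c`. -/
def Cmp.sat : Cmp → NNReal → ℕ → Prop
  | .lt, a, c => a < (c : NNReal)
  | .le, a, c => a ≤ (c : NNReal)
  | .eq, a, c => a = (c : NNReal)
  | .ge, a, c => (c : NNReal) ≤ a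
  | .gt, a, c => (c : NNReal) < a

/-- An atomic clock constraint `x # c`. -/
structure Atomic (X : Type*) where
  clock : X
  cmp : Cmp
  bound : ℕ

/-- A guard is a finite conjunction of atomic constraints. -/
abbrev Guard (X : Type*) := List (Atomic X)

/-- `v ⊨ g`. -/
def satG {X : Type*} (v : Val X) (g : Guard X) : Prop :=
  ∀ a ∈ g, a.cmp.sat (v a.clock) a.bound

/-- Lower-bound constraints: `x > c` or `x ≥ c`. -/
def Atomic.isLower {X : Type*} (a : Atomic X) : Prop := a.cmp = Cmp.gt ∨ a.cmp = Cmp.ge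

/-- Upper-bound constraints: `x < c` or `x ≤ c`. -/
def Atomic.isUpper {X : Type*} (a : Atomic X) : Prop := a.cmp = Cmp.lt ∨ a.cmp = Cmp.le

/-- A set `W` of valuations is time-elapsed. -/
def TimeElapsed {X : Type*} (W : Set (Val X)) : Prop :=
  ∀ v ∈ W, ∀ δ : NNReal, delay v δ ∈ W

/-- `Post_{g,R}(W) = { [R]v + δ | v ∈ W, v ⊨ g, δ ∈ ℝ≥0 }`. -/
def post {X : Type*} (g : Guard X) (R : Set X) (W : Set (Val X)) : Set (Val X) :=
  { w | ∃ v ∈ W, satG v g ∧ ∃ δ : NNReal, w = delay (resetV R v) δ }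

/-- LU-bounds take values in `ℕ ∪ {−∞}`. -/
abbrev Bnd := WithBot ℕ

/-- `b < r` where `b ∈ ℕ ∪ {−∞}` and `r ∈ ℝ≥0` (every real is greater than `−∞`). -/
def Bnd.ltVal (b : Bnd) (r : NNReal) : Prop :=
  ∀ n : ℕ, b = (n : Bnd) → (n : NNReal) < r

/-- The LU-preorder `v ⊑_LU v'`. -/
def luLe {X : Type*} (L U : X → Bnd) (v v' : Val X) : Prop :=
  ∀ x, (v' x < v x → Bnd.ltVal (L x) (v' x)) ∧ (v x < v' x → Bnd.ltVal (U x) (v x))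

/-- `a_LU(W)`. -/
def aLU {X : Type*} (L U : X → Bnd) (W : Set (Val X)) : Set (Val X) :=
  { v | ∃ v' ∈ W, luLe L U v v' }

/-- A timed automaton `(Q, q0, X, T, Acc)` (finiteness of `Q`, `X`, `trans`
is imposed as hypotheses of the theorems). -/
structure TA (Q X : Type*) where
  q0 : Q
  trans : Set (Q × Guard X × Set X × Q)
  acc : Set Q

/-- One delay or action transition between configurations. -/
def step {Q X : Type*} (A : TA Q X) (c c' : Q × Val X) : Prop :=
  (c'.1 = c.1 ∧ ∃ δ : NNReal, c'.2 = delay c.2 δ) ∨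
  (∃ g R, (c.1, g, R, c'.1) ∈ A.trans ∧ satG c.2 g ∧ c'.2 = resetV R c.2)

/-- There is a run (finite alternating sequence of delay and action transitions)
from `c` to `c'`. -/
def Reach {Q X : Type*} (A : TA Q X) : (Q × Val X) → (Q × Val X) → Prop :=
  Relation.ReflTransGen (step A)

/-- Symbolic transition `(q,W) ⇒^t (q', Post_t(W))`, union over all `t ∈ T`. -/
def symbStep {Q X : Type*} (A : TA Q X) (p p' : Q × Set (Val X)) : Prop :=
  ∃ g R, (p.1, g, R, p'.1) ∈ A.trans ∧ p'.2 = post g R p.2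

/-- The initial zone `Z0 = { 0̄ + δ | δ ∈ ℝ≥0 }`. -/
def Z0 (X : Type*) : Set (Val X) := { v | ∃ δ : NNReal, v = delay (zeroVal X) δ }

/-- Time-abstract simulation for `A`. -/
def IsTASim {Q X : Type*} (A : TA Q X) (S : (Q × Val X) → (Q × Val X) → Prop) : Prop :=
  (∀ c c', S c c' → c.1 = c'.1) ∧
  (∀ (q : Q) (v v' : Val X) (δ : NNReal) (g : Guard X) (R : Set X) (q1 : Q),
    S (q, v) (q, v') → (q, g, R, q1) ∈ A.trans → satG (delay v δ) g →
    ∃ δ' : NNReal, satG (delay v' δ') g ∧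
      S (q1, resetV R (delay v δ)) (q1, resetV R (delay v' δ')))

/-- Abstraction induced by a preorder `≼` on valuations. -/
def aAbs {X : Type*} (pre : Val X → Val X → Prop) (W : Set (Val X)) : Set (Val X) :=
  { v | ∃ v' ∈ W, pre v v' }

/-- Abstract transition `(q,W) ⇒_a (q', a(W'))` whenever `W = a(W)` and `(q,W) ⇒ (q',W')`. -/
def absStep {Q X : Type*} (A : TA Q X) (pre : Val X → Val X → Prop)
    (p p' : Q × Set (Val X)) : Prop :=
  p.2 = aAbs pre p.2 ∧ ∃ W', symbStep A p (p'.1, W') ∧ p'.2 = aAbs pre W'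

/-! Every valuation of a node reachable under `⇒_a` lies `≼`-below a time successor of some
valuation that is itself simulated by a concretely reachable one. Simulating the next guarded
reset from such a valuation (first through the delay, then through `≼`) preserves this, and the
concretely reachable witnesses, being drawn from `Post` of the previous node, stay in the node
together with all their time successors. -/

lemma delay_zero {X : Type*} (v : Val X) : delay v 0 = v := by
  funext x; simp [delay]

lemma delay_delay {X : Type*} (v : Val X) (a b : NNReal) :
    delay (delay v a) b = delay v (a + b) := by
  funext x; simp [delay, add_assoc]

lemma Reach.tail_delay {Q X : Type*} {A : TA Q X} {c : Q × Val X} {q : Q} {v : Val X}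
    (h : Reach A c (q, v)) (δ : NNReal) : Reach A c (q, delay v δ) :=
  Relation.ReflTransGen.tail h (Or.inl ⟨rfl, δ, rfl⟩)

lemma Reach.tail_action {Q X : Type*} {A : TA Q X} {c : Q × Val X} {q q' : Q} {v : Val X}
    {g : Guard X} {R : Set X} (h : Reach A c (q, v)) (ht : (q, g, R, q') ∈ A.trans)
    (hg : satG v g) : Reach A c (q', resetV R v) :=
  Relation.ReflTransGen.tail h (Or.inr ⟨g, R, ht, hg, rfl⟩)

def DelayDominated {X : Type*} (pre : Val X → Val X → Prop) (v w : Val X) : Prop :=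
  ∃ r δ, pre v (delay r δ) ∧ pre r w

section Simulation

variable {Q X : Type*} {A : TA Q X} {pre : Val X → Val X → Prop}

lemma DelayDominated.exists_action
    (htrans : ∀ u v w, pre u v → pre v w → pre u w)
    (hsim : IsTASim A (fun c c' => c.1 = c'.1 ∧ pre c.2 c'.2))
    {q q' : Q} {g : Guard X} {R : Set X} (ht : (q, g, R, q') ∈ A.trans)
    {u w : Val X} (huw : DelayDominated pre u w) (hg : satG u g) :
    ∃ δ, satG (delay w δ) g ∧ pre (resetV R u) (resetV R (delay w δ)) := by
  obtain ⟨r, δ, hur, hrw⟩ := huw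
  obtain ⟨δ₁, hg₁, -, hpre₁⟩ :=
    hsim.2 q u (delay r δ) 0 g R q' ⟨rfl, hur⟩ ht (by rwa [delay_zero])
  rw [delay_zero, delay_delay] at hpre₁
  rw [delay_delay] at hg₁
  obtain ⟨δ₂, hg₂, -, hpre₂⟩ := hsim.2 q r w (δ + δ₁) g R q' ⟨rfl, hrw⟩ ht hg₁
  exact ⟨δ₂, hg₂, htrans _ _ _ hpre₁ hpre₂⟩

lemma exists_reachable_dominating_of_absReach
    (hrefl : ∀ v, pre v v) (htrans : ∀ u v w, pre u v → pre v w → pre u w)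
    (hsim : IsTASim A (fun c c' => c.1 = c'.1 ∧ pre c.2 c'.2))
    {p : Q × Set (Val X)}
    (habs : Relation.ReflTransGen (absStep A pre) (A.q0, aAbs pre (Z0 X)) p) :
    ∀ v ∈ p.2, ∃ w, DelayDominated pre v w ∧
      ∀ δ, delay w δ ∈ p.2 ∧ Reach A (A.q0, zeroVal X) (p.1, delay w δ) := by
  induction habs with
  | refl =>
    rintro v ⟨_, ⟨δ, rfl⟩, hv⟩
    refine ⟨zeroVal X, ⟨zeroVal X, δ, hv, hrefl _⟩, fun δ' => ⟨?_, ?_⟩⟩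
    · exact ⟨_, ⟨δ', rfl⟩, hrefl _⟩
    · exact Reach.tail_delay .refl δ'
  | @tail p p' _ hstep ih =>
    obtain ⟨-, W', ⟨g, R, ht : (p.1, g, R, p'.1) ∈ A.trans, hW' : W' = post g R p.2⟩, hp'⟩ :=
      hstep
    intro v hv
    rw [hp'] at hv
    obtain ⟨_, hw, hv⟩ := hv
    rw [hW'] at hw
    obtain ⟨u, hu, hg, δ, rfl⟩ := hw
    obtain ⟨w, huw, hw⟩ := ih u hu
    obtain ⟨δ', hg', hpre⟩ := huw.exists_action htrans hsim ht hg
    refine ⟨resetV R (delay w δ'), ⟨resetV R u, δ, hv, hpre⟩, fun δ'' => ⟨?_, ?_⟩⟩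
    · rw [hp', hW']
      exact ⟨_, ⟨_, (hw δ').1, hg', δ'', rfl⟩, hrefl _⟩
    · exact ((hw δ').2.tail_action ht hg').tail_delay δ''

end Simulation

theorem stmt_4_general {Q X : Type*} (A : TA Q X)
    (pre : Val X → Val X → Prop)
    (hrefl : ∀ v, pre v v) (htrans : ∀ u v w, pre u v → pre v w → pre u w)
    (hsim : IsTASim A (fun c c' => c.1 = c'.1 ∧ pre c.2 c'.2))
    (q : Q) (W : Set (Val X))
    (habs : Relation.ReflTransGen (absStep A pre) (A.q0, aAbs pre (Z0 X)) (q, W))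
    (hW : W ≠ (∅ : Set (Val X))) :
    ∃ v ∈ W, Reach A (A.q0, zeroVal X) (q, v) := by
  obtain ⟨v, hv⟩ := Set.nonempty_iff_ne_empty.mpr hW
  obtain ⟨w, -, hw⟩ := exists_reachable_dominating_of_absReach hrefl htrans hsim habs v hv
  exact ⟨delay w 0, hw 0⟩

/-- Soundness: if `(q0, a(Z0)) ⇒_a^* (q, W)` and `W ≠ ∅`, then some
`v ∈ W` is reachable by a run of `A` from `(q0, 0̄)` ending in `(q, v)`. -/
theorem stmt_4 {Q X : Type*} [Finite Q] [Finite X] (A : TA Q X) (hT : A.trans.Finite)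
    (pre : Val X → Val X → Prop)
    (hrefl : ∀ v, pre v v) (htrans : ∀ u v w, pre u v → pre v w → pre u w)
    (hsim : IsTASim A (fun c c' => c.1 = c'.1 ∧ pre c.2 c'.2))
    (q : Q) (W : Set (Val X))
    (habs : Relation.ReflTransGen (absStep A pre) (A.q0, aAbs pre (Z0 X)) (q, W))
    (hW : W ≠ (∅ : Set (Val X))) :
    ∃ v ∈ W, Reach A (A.q0, zeroVal X) (q, v) :=
  stmt_4_general A pre hrefl htrans hsim q W habs hW
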